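/- Upper Bound on Price of Frugality for Submodular Instances: Let (A, f, c) be a multi-agent contract instance with n ≥ 1 agents and monotone submodular f, let 0 < b < B, let φ : 2^A → [0,1] be a subadditive set function, and suppose p({i}) ≤ b for every agent i ∈ A. Then Max-φ(B) ≤ min(⌈2B/b⌉ − 1, n) · Max-φ(b). -/

import Mathlib

open scoped BigOperators ENNReal
open Finset

/-- Marginal contribution of agent `i` to set `S`: `f_S(i) = f(S) - f(S \ {i})`. -/
noncomputable def marginal {α : Type*} [DecidableEq α] (f : Finset α → ℝ) (S : Finset α)
    (i : α) : ℝ :=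
  f S - f (S.erase i)

/-- Payment needed to incentivize `S`, valued in `[0,∞]`, with the conventions
`0/0 = 0` and `x/0 = ∞` for `x > 0` (these hold for ENNReal division). -/
noncomputable def payment {α : Type*} [DecidableEq α] (f : Finset α → ℝ) (c : α → ℝ)
    (S : Finset α) : ℝ≥0∞ :=
  ∑ i ∈ S, ENNReal.ofReal (c i) / ENNReal.ofReal (marginal f S i)

/-- The principal's profit from incentivizing `S`: `g(S) = (1 - p(S)) · f(S)`. -/
noncomputable def profit {α : Type*} [DecidableEq α] (f : Finset α → ℝ) (c : α → ℝ)
    (S : Finset α) : ℝ :=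
  (1 - (payment f c S).toReal) * f S

/-- `f` is monotone. -/
def IsMonotoneFn {α : Type*} (f : Finset α → ℝ) : Prop :=
  ∀ ⦃S T : Finset α⦄, S ⊆ T → f S ≤ f T

/-- `f` is subadditive. -/
def IsSubadditive {α : Type*} [DecidableEq α] (f : Finset α → ℝ) : Prop :=
  ∀ S T : Finset α, f (S ∪ T) ≤ f S + f T

/-- `f` is submodular (decreasing marginal values). -/
def IsSubmodular {α : Type*} [DecidableEq α] (f : Finset α → ℝ) : Prop :=
  ∀ ⦃S T : Finset α⦄, S ⊆ T → ∀ i ∉ T, f (insert i T) - f T ≤ f (insert i S) - f S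

/-- `f` is additive. -/
def IsAdditive {α : Type*} [DecidableEq α] (f : Finset α → ℝ) : Prop :=
  ∀ S : Finset α, f S = ∑ i ∈ S, f {i}

/-- `f` is XOS: a finite max of nonnegative additive functions. -/
def IsXOS {α : Type*} (f : Finset α → ℝ) : Prop :=
  ∃ (k : ℕ) (a : Fin (k + 1) → α → ℝ),
    (∀ j i, 0 ≤ a j i) ∧
    ∀ S : Finset α, f S = Finset.univ.sup' Finset.univ_nonempty (fun j => ∑ i ∈ S, a j i)

/-- Agent `i` is light: it can be incentivized with payment at most `1/2`. -/
def isLight {α : Type*} [DecidableEq α] (f : Finset α → ℝ) (c : α → ℝ) (i : α) : Prop :=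
  payment f c {i} ≤ ENNReal.ofReal (1 / 2)

/-- `S` is budget-feasible for budget `B`. -/
def feasible {α : Type*} [DecidableEq α] (f : Finset α → ℝ) (c : α → ℝ) (B : ℝ)
    (S : Finset α) : Prop :=
  payment f c S ≤ ENNReal.ofReal B

/-- `S` is a budget-feasible set of light agents. -/
def feasibleLight {α : Type*} [DecidableEq α] (f : Finset α → ℝ) (c : α → ℝ) (B : ℝ)
    (S : Finset α) : Prop :=
  (∀ i ∈ S, isLight f c i) ∧ payment f c S ≤ ENNReal.ofReal B

/-- The maximum (supremum) value of objective `φ` over sets satisfying `P`. -/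
noncomputable def maxVal {α : Type*} (φ : Finset α → ℝ) (P : Finset α → Prop) : ℝ :=
  sSup (φ '' {S | P S})

/-- `φ` is a BEST objective for the instance `(f, c)`: it is nonnegative, sandwiched between
profit and reward, and satisfies `φ(S) ≤ f(S \ {i}) + φ({i})` for `i ∈ S`. -/
def IsBEST {α : Type*} [DecidableEq α] (f : Finset α → ℝ) (c : α → ℝ)
    (φ : Finset α → ℝ) : Prop :=
  (∀ S, 0 ≤ φ S) ∧
  (∀ S, φ S ≤ f S) ∧
  (∀ S, payment f c S ≤ 1 → (1 - (payment f c S).toReal) * f S ≤ φ S) ∧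
  (∀ S, ∀ i ∈ S, φ S ≤ f (S.erase i) + φ {i})

/-- `φ` is a BEST objective for the instance `(f, c)` restricted to sets satisfying `P`. -/
def IsBESTOn {α : Type*} [DecidableEq α] (f : Finset α → ℝ) (c : α → ℝ)
    (P : Finset α → Prop) (φ : Finset α → ℝ) : Prop :=
  (∀ S, P S → 0 ≤ φ S) ∧
  (∀ S, P S → φ S ≤ f S) ∧
  (∀ S, P S → payment f c S ≤ 1 → (1 - (payment f c S).toReal) * f S ≤ φ S) ∧
  (∀ S, P S → ∀ i ∈ S, φ S ≤ f (S.erase i) + φ {i})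

/-!
Let `S` be feasible for budget `B` and let `q i = c_i / f_S(i)` be its payment to agent `i`, so
that `∑_{i ∈ S} q i ≤ B`. By submodularity marginals only grow on subsets of `S`, so every `T ⊆ S`
with `∑_{i ∈ T} q i ≤ b` is feasible for budget `b`, as is every singleton by assumption.
Repeatedly splitting off a part of weight more than `b / 2` that is a singleton or has weight at
most `b` covers `S` by at most `⌈2B/b⌉ - 1` such parts, while singletons cover it with at most `n`
parts. Subadditivity of `ψ` bounds `ψ S` by the number of parts times `Max-ψ(b)`.
-/

section Cover

variable {α : Type*} [DecidableEq α]

theorem Finset.exists_subset_half_lt_sum (q : α → ℝ) (b : ℝ) {S : Finset α}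
    (hS : b / 2 < ∑ i ∈ S, q i) :
    ∃ T ⊆ S, (T.card ≤ 1 ∨ ∑ i ∈ T, q i ≤ b) ∧ b / 2 < ∑ i ∈ T, q i := by
  induction S using Finset.induction_on with
  | empty => simp only [sum_empty] at hS; exact ⟨∅, subset_rfl, by simp, by simpa using hS⟩
  | @insert a s ha ih =>
    by_cases hqa : b / 2 < q a
    · exact ⟨{a}, by simp, Or.inl (card_singleton a).le, by simpa using hqa⟩
    by_cases hs : b / 2 < ∑ i ∈ s, q i
    · obtain ⟨T, hTs, hT⟩ := ih hs
      exact ⟨T, hTs.trans (subset_insert a s), hT⟩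
    rw [sum_insert ha] at hS
    exact ⟨insert a s, subset_rfl, Or.inr (by rw [sum_insert ha]; linarith), by rwa [sum_insert ha]⟩

theorem Finset.exists_cover_of_sum_le (q : α → ℝ) {b : ℝ} (hb : 0 ≤ b) {k : ℕ} (hk : 1 ≤ k)
    {S : Finset α} (hS : ∑ i ∈ S, q i ≤ (k + 1) * (b / 2)) :
    ∃ P : Finset (Finset α), P.Nonempty ∧ P.card ≤ k ∧ P.sup id = S ∧
      ∀ T ∈ P, T.card ≤ 1 ∨ ∑ i ∈ T, q i ≤ b := by
  induction k, hk using Nat.le_induction generalizing S with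
  | base =>
    refine ⟨{S}, singleton_nonempty S, by simp, by simp, ?_⟩
    simp only [mem_singleton, forall_eq]
    right; linarith
  | succ k hk ih =>
    by_cases hSb : ∑ i ∈ S, q i ≤ b
    · exact ⟨{S}, singleton_nonempty S, by simp, by simp, by simpa using Or.inr hSb⟩
    obtain ⟨T, hTS, hT, hTq⟩ := exists_subset_half_lt_sum q b (S := S) (by linarith)
    have hrest : ∑ i ∈ S \ T, q i ≤ (k + 1) * (b / 2) := by
      rw [sum_sdiff_eq_sub hTS]; push_cast at hS; linarith
    obtain ⟨P, -, hPk, hPS, hP⟩ := ih hrest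
    refine ⟨insert T P, insert_nonempty T P, (card_insert_le T P).trans (by omega), ?_, ?_⟩
    · rw [sup_insert, hPS, id, sup_eq_union, union_sdiff_of_subset hTS]
    · simpa [forall_mem_insert] using ⟨hT, hP⟩

end Cover

section Subadditive

variable {α : Type*} [DecidableEq α] {ψ : Finset α → ℝ}

theorem IsSubadditive.apply_empty_nonneg (hψ : IsSubadditive ψ) : 0 ≤ ψ ∅ := by
  have := hψ ∅ ∅
  rw [empty_union] at this
  linarith

theorem IsSubadditive.apply_sup_le_sum (hψ : IsSubadditive ψ) {P : Finset (Finset α)}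
    (hP : P.Nonempty) : ψ (P.sup id) ≤ ∑ T ∈ P, ψ T := by
  induction hP using Finset.Nonempty.cons_induction with
  | singleton T => simp
  | cons T P hT _ ih =>
    rw [sup_cons, sum_cons]
    exact (hψ T _).trans (by simpa using ih)

theorem IsSubadditive.le_mul_of_sum_le (hψ : IsSubadditive ψ) (q : α → ℝ) {b M : ℝ}
    (hb : 0 ≤ b) {k : ℕ} (hk : 1 ≤ k) {S : Finset α}
    (hS : ∑ i ∈ S, q i ≤ (k + 1) * (b / 2))
    (hM : ∀ T ⊆ S, T.card ≤ 1 ∨ ∑ i ∈ T, q i ≤ b → ψ T ≤ M) :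
    ψ S ≤ k * M := by
  have hM0 : 0 ≤ M := hψ.apply_empty_nonneg.trans (hM ∅ (empty_subset S) (by simp))
  obtain ⟨P, hP, hPk, rfl, hPgood⟩ := exists_cover_of_sum_le q hb hk hS
  calc ψ (P.sup id) ≤ ∑ T ∈ P, ψ T := hψ.apply_sup_le_sum hP
    _ ≤ P.card • M := sum_le_card_nsmul P ψ M fun T hT =>
        hM T (le_sup (f := id) hT) (hPgood T hT)
    _ ≤ k * M := by rw [nsmul_eq_mul]; gcongr

theorem IsSubadditive.le_card_mul (hψ : IsSubadditive ψ) {M : ℝ} {S : Finset α}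
    (hS : S.Nonempty) (hM : ∀ i ∈ S, ψ {i} ≤ M) : ψ S ≤ S.card * M := by
  induction hS using Finset.Nonempty.cons_induction with
  | singleton i => simpa using hM i (mem_singleton_self i)
  | cons i S hi _ ih =>
    rw [cons_eq_insert, card_insert_of_notMem hi, insert_eq]
    have := ih fun j hj => hM j (mem_cons_of_mem hj)
    have := hψ {i} S
    have := hM i (mem_cons_self i S)
    push_cast
    linarith

theorem IsSubadditive.le_mul_of_card_le (hψ : IsSubadditive ψ) {M : ℝ} {n : ℕ} (hn : 1 ≤ n)
    {S : Finset α} (hSn : S.card ≤ n) (hM : ∀ T ⊆ S, T.card ≤ 1 → ψ T ≤ M) :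
    ψ S ≤ n * M := by
  have hM0 : 0 ≤ M := hψ.apply_empty_nonneg.trans (hM ∅ (empty_subset S) (by simp))
  rcases S.eq_empty_or_nonempty with rfl | hS
  · calc ψ ∅ ≤ M := hM ∅ subset_rfl (by simp)
      _ ≤ n * M := le_mul_of_one_le_left hM0 (by exact_mod_cast hn)
  calc ψ S ≤ S.card * M := hψ.le_card_mul hS fun i hi =>
        hM {i} (singleton_subset_iff.mpr hi) (card_singleton i).le
    _ ≤ n * M := by gcongr

end Subadditive

section Contract

variable {α : Type*} [DecidableEq α] {f : Finset α → ℝ} {c : α → ℝ}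

noncomputable def agentPayment (f : Finset α → ℝ) (c : α → ℝ) (S : Finset α) (i : α) : ℝ≥0∞ :=
  ENNReal.ofReal (c i) / ENNReal.ofReal (marginal f S i)

theorem payment_eq_sum_agentPayment (f : Finset α → ℝ) (c : α → ℝ) (S : Finset α) :
    payment f c S = ∑ i ∈ S, agentPayment f c S i := rfl

theorem IsSubmodular.marginal_le_of_subset (hf : IsSubmodular f) {S T : Finset α} (hTS : T ⊆ S)
    {i : α} (hi : i ∈ T) : marginal f S i ≤ marginal f T i := by
  have h := hf (erase_subset_erase i hTS) i (notMem_erase i S)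
  rw [insert_erase (hTS hi), insert_erase hi] at h
  unfold marginal
  linarith

theorem IsSubmodular.payment_le_sum_agentPayment (hf : IsSubmodular f) {S T : Finset α}
    (hTS : T ⊆ S) : payment f c T ≤ ∑ i ∈ T, agentPayment f c S i :=
  sum_le_sum fun _ hi => ENNReal.div_le_div_left
    (ENNReal.ofReal_le_ofReal (hf.marginal_le_of_subset hTS hi)) _

theorem sum_toReal_agentPayment_le {B : ℝ} (hB : 0 ≤ B) {S : Finset α}
    (hS : feasible f c B S) : ∑ i ∈ S, (agentPayment f c S i).toReal ≤ B := by
  have hfin : payment f c S ≠ ⊤ := ne_top_of_le_ne_top ENNReal.ofReal_ne_top hS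
  rw [feasible, payment_eq_sum_agentPayment] at hS
  rw [payment_eq_sum_agentPayment] at hfin
  rw [← ENNReal.toReal_sum (ENNReal.sum_ne_top.mp hfin)]
  exact ENNReal.toReal_le_of_le_ofReal hB hS

theorem IsSubmodular.feasible_of_sum_toReal_le (hf : IsSubmodular f) {b B : ℝ}
    {S T : Finset α} (hS : feasible f c B S) (hTS : T ⊆ S)
    (hT : ∑ i ∈ T, (agentPayment f c S i).toReal ≤ b) : feasible f c b T := by
  have hfin : ∀ i ∈ S, agentPayment f c S i ≠ ⊤ :=
    ENNReal.sum_ne_top.mp (ne_top_of_le_ne_top ENNReal.ofReal_ne_top hS)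
  calc payment f c T ≤ ∑ i ∈ T, agentPayment f c S i := hf.payment_le_sum_agentPayment hTS
    _ = ENNReal.ofReal (∑ i ∈ T, (agentPayment f c S i).toReal) := by
        rw [ENNReal.ofReal_sum_of_nonneg fun _ _ => ENNReal.toReal_nonneg]
        exact sum_congr rfl fun i hi => (ENNReal.ofReal_toReal (hfin i (hTS hi))).symm
    _ ≤ ENNReal.ofReal b := ENNReal.ofReal_le_ofReal hT

theorem feasible_empty (f : Finset α → ℝ) (c : α → ℝ) (b : ℝ) : feasible f c b ∅ := by
  simp [feasible, payment]

theorem feasible_of_card_le_one {b : ℝ} (hsing : ∀ i, feasible f c b {i}) {T : Finset α}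
    (hT : T.card ≤ 1) : feasible f c b T := by
  rcases T.eq_empty_or_nonempty with rfl | ⟨i, hi⟩
  · exact feasible_empty f c b
  · rw [eq_singleton_iff_unique_mem.mpr ⟨hi, fun j hj => card_le_one.mp hT j hj i hi⟩]
    exact hsing i

end Contract

theorem le_maxVal {α : Type*} [Finite α] {φ : Finset α → ℝ} {P : Finset α → Prop}
    {S : Finset α} (hS : P S) : φ S ≤ maxVal φ P :=
  le_csSup (Set.toFinite _).bddAbove ⟨S, hS, rfl⟩

theorem maxVal_le {α : Type*} {φ : Finset α → ℝ} {P : Finset α → Prop} {x : ℝ}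
    (hP : ∃ S, P S) (h : ∀ S, P S → φ S ≤ x) : maxVal φ P ≤ x := by
  obtain ⟨S, hS⟩ := hP
  exact csSup_le ⟨φ S, S, hS, rfl⟩ (by rintro _ ⟨T, hT, rfl⟩; exact h T hT)

theorem exists_nat_cast_eq_ceil_sub_one {b B : ℝ} (hb : 0 < b) (hbB : b < B) :
    ∃ k : ℕ, 1 ≤ k ∧ (k : ℤ) = ⌈2 * B / b⌉ - 1 ∧ B ≤ (k + 1) * (b / 2) := by
  have hceil : 1 < 2 * B / b := by rw [lt_div_iff₀ hb]; linarith
  have h2 : 1 < ⌈2 * B / b⌉ := Int.lt_ceil.mpr (by exact_mod_cast hceil)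
  refine ⟨(⌈2 * B / b⌉ - 1).toNat, by omega, Int.toNat_of_nonneg (by omega), ?_⟩
  have hk : (((⌈2 * B / b⌉ - 1).toNat : ℤ) : ℝ) = ⌈2 * B / b⌉ - 1 := by
    rw [Int.toNat_of_nonneg (by omega)]; push_cast; ring
  have := (div_le_iff₀ hb).mp (Int.le_ceil (2 * B / b))
  push_cast at hk ⊢
  rw [hk]
  linarith

theorem pof_upper_submodular_general {α : Type*} [DecidableEq α] [Fintype α] [Nonempty α]
    (f : Finset α → ℝ) (c : α → ℝ) (ψ : Finset α → ℝ)
    (hsubmod : IsSubmodular f)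
    (hψ : IsSubadditive ψ)
    (b B : ℝ) (hb : 0 < b) (hbB : b < B)
    (hsing : ∀ i, payment f c {i} ≤ ENNReal.ofReal b) :
    maxVal ψ (feasible f c B) ≤
      ((min (⌈2 * B / b⌉ - 1) (Fintype.card α : ℤ) : ℤ) : ℝ) * maxVal ψ (feasible f c b) := by
  obtain ⟨k, hk1, hkK, hBk⟩ := exists_nat_cast_eq_ceil_sub_one hb hbB
  set M := maxVal ψ (feasible f c b)
  have hM0 : 0 ≤ M := hψ.apply_empty_nonneg.trans (le_maxVal (feasible_empty f c b))
  refine maxVal_le ⟨∅, feasible_empty f c B⟩ fun S hS => ?_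
  rw [← hkK, Int.cast_min, min_mul_of_nonneg _ _ hM0]
  have hgood : ∀ T ⊆ S, T.card ≤ 1 ∨ ∑ i ∈ T, (agentPayment f c S i).toReal ≤ b →
      ψ T ≤ M := by
    rintro T hTS (hT | hT)
    · exact le_maxVal (feasible_of_card_le_one hsing hT)
    · exact le_maxVal (hsubmod.feasible_of_sum_toReal_le hS hTS hT)
  refine le_min ?_ ?_
  · exact_mod_cast hψ.le_mul_of_sum_le _ hb.le hk1
      ((sum_toReal_agentPayment_le (hb.trans hbB).le hS).trans hBk) hgood
  · exact_mod_cast hψ.le_mul_of_card_le Fintype.card_pos (card_le_univ S)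
      fun T hTS hT => hgood T hTS (Or.inl hT)

/-- **Upper Bound on Price of Frugality for Submodular Instances.** -/
theorem pof_upper_submodular {α : Type*} [DecidableEq α] [Fintype α] [Nonempty α]
    (f : Finset α → ℝ) (c : α → ℝ) (ψ : Finset α → ℝ)
    (hf01 : ∀ S, f S ∈ Set.Icc (0 : ℝ) 1) (hf0 : f ∅ = 0)
    (hmono : IsMonotoneFn f) (hsubmod : IsSubmodular f) (hc : ∀ i, 0 ≤ c i)
    (hψ01 : ∀ S, ψ S ∈ Set.Icc (0 : ℝ) 1) (hψ : IsSubadditive ψ)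
    (b B : ℝ) (hb : 0 < b) (hbB : b < B)
    (hsing : ∀ i, payment f c {i} ≤ ENNReal.ofReal b) :
    maxVal ψ (feasible f c B) ≤
      ((min (⌈2 * B / b⌉ - 1) (Fintype.card α : ℤ) : ℤ) : ℝ) * maxVal ψ (feasible f c b) :=
  pof_upper_submodular_general f c ψ hsubmod hψ b B hb hbB hsing
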